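/- With notation as above and v_k ≠ v_l, the orthogonal projection P = I_{3N} - e⊗e - Σ_σ m_σ⊗m_σ - Σ_{i,σ} w_{i,σ}⊗w_{i,σ} acts on a vector ξ = (ξ_1,...,ξ_N) ∈ (R^3)^N as follows: its i-th block is zero for i ∉ {k,l}, its k-th block is (1/2) P^⊥_{v_k-v_l}(ξ_k - ξ_l), and its l-th block is (1/2) P^⊥_{v_k-v_l}(ξ_l - ξ_k), where P^⊥_{v_k-v_l} = I_3 - ((v_k-v_l)/|v_k-v_l|)⊗((v_k-v_l)/|v_k-v_l|). -/
import Mathlib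


open Finset
open scoped RealInnerProductSpace

/-- The orthogonal projection `P = I - e⊗e - Σ_σ m_σ⊗m_σ - Σ_{i,σ} w_{i,σ}⊗w_{i,σ}` onto
the tangent space of the collision manifold `B²_{kl}` acts blockwise: the `i`-th block of
`Pξ` is `0` for `i ∉ {k,l}`, the `k`-th block is `(1/2) P⊥_{v_k-v_l}(ξ_k - ξ_l)` and the
`l`-th block is `(1/2) P⊥_{v_k-v_l}(ξ_l - ξ_k)`. -/
theorem collision_projection_action (N : ℕ)
    (v : Fin N → EuclideanSpace ℝ (Fin 3)) (k l : Fin N) (hlk : l < k)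
    (hv : v k ≠ v l) (ξ : Fin N → EuclideanSpace ℝ (Fin 3)) :
    let d : EuclideanSpace ℝ (Fin 3) := v k - v l
    let c : ℝ := (Real.sqrt 2 * ‖d‖)⁻¹
    let m : Fin 3 → Fin N → EuclideanSpace ℝ (Fin 3) := fun σ i =>
      if i = k ∨ i = l then (Real.sqrt 2)⁻¹ • EuclideanSpace.single σ (1 : ℝ) else 0
    let e : Fin N → EuclideanSpace ℝ (Fin 3) := fun i =>
      if i = k then c • d else if i = l then -(c • d) else 0
    let Pperp : EuclideanSpace ℝ (Fin 3) → EuclideanSpace ℝ (Fin 3) := fun x =>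
      x - (‖d‖ ^ 2)⁻¹ • (⟪d, x⟫ • d)
    let η : Fin N → EuclideanSpace ℝ (Fin 3) := fun i =>
      ξ i - (∑ i', ⟪e i', ξ i'⟫) • e i - (∑ σ, (∑ i', ⟪m σ i', ξ i'⟫) • m σ i)
        - (if i = k ∨ i = l then 0 else ξ i)
    (∀ i, i ≠ k → i ≠ l → η i = 0) ∧
    η k = (1 / 2 : ℝ) • Pperp (ξ k - ξ l) ∧
    η l = (1 / 2 : ℝ) • Pperp (ξ l - ξ k) := by
  intro d c m e Pperp η
  have hkl : k ≠ l := fun h => absurd h.symm (ne_of_lt hlk)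
  have hd : d ≠ 0 := sub_ne_zero.mpr hv
  have hdn : ‖d‖ ≠ 0 := norm_ne_zero_iff.mpr hd
  have h2 : Real.sqrt 2 * Real.sqrt 2 = 2 := Real.mul_self_sqrt (by norm_num)
  have h2n : Real.sqrt 2 ≠ 0 := by positivity
  have hse : (∑ i', ⟪e i', ξ i'⟫) = c * ⟪d, ξ k⟫ - c * ⟪d, ξ l⟫ := by
    rw [Finset.sum_eq_add_of_mem k l (Finset.mem_univ k) (Finset.mem_univ l) hkl
      (fun j _ hj => by simp [e, hj.1, hj.2])]
    simp only [e, if_pos rfl, if_neg hkl.symm, ite_true, eq_self_iff_true,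
      inner_neg_left, real_inner_smul_left]
    ring
  have hsm : ∀ σ, (∑ i', ⟪m σ i', ξ i'⟫)
      = (Real.sqrt 2)⁻¹ * (ξ k σ + ξ l σ) := by
    intro σ
    rw [Finset.sum_eq_add_of_mem k l (Finset.mem_univ k) (Finset.mem_univ l) hkl
      (fun j _ hj => by simp [m, hj.1, hj.2])]
    simp [m, real_inner_smul_left, EuclideanSpace.inner_single_left, mul_add]
  have hsingle : ∀ x : EuclideanSpace ℝ (Fin 3),
      ∑ σ, x σ • EuclideanSpace.single σ (1:ℝ) = x := fun x => by
    simpa [EuclideanSpace.basisFun_apply, EuclideanSpace.basisFun_repr] using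
      (EuclideanSpace.basisFun (Fin 3) ℝ).sum_repr x
  have hsum : ∑ σ, ((Real.sqrt 2)⁻¹ * (ξ k σ + ξ l σ)) •
      ((Real.sqrt 2)⁻¹ • EuclideanSpace.single σ (1:ℝ)) = (2:ℝ)⁻¹ • (ξ k + ξ l) := by
    calc ∑ σ, ((Real.sqrt 2)⁻¹ * (ξ k σ + ξ l σ)) •
        ((Real.sqrt 2)⁻¹ • EuclideanSpace.single σ (1:ℝ))
        = ∑ σ, (((2:ℝ)⁻¹ • (ξ k + ξ l)) σ) • EuclideanSpace.single σ (1:ℝ) := by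
          refine Finset.sum_congr rfl fun σ _ => ?_
          rw [smul_smul]
          congr 1
          simp only [PiLp.smul_apply, PiLp.add_apply, smul_eq_mul]
          rw [mul_comm ((Real.sqrt 2)⁻¹), mul_assoc, ← mul_inv, h2, mul_comm]
      _ = (2:ℝ)⁻¹ • (ξ k + ξ l) := hsingle _
  have hcc : c * c = (2 * ‖d‖ ^ 2)⁻¹ := by
    show (Real.sqrt 2 * ‖d‖)⁻¹ * (Real.sqrt 2 * ‖d‖)⁻¹ = _
    rw [← mul_inv, mul_mul_mul_comm, h2, sq]
  have hc : (c * ⟪d, ξ k⟫ - c * ⟪d, ξ l⟫) * c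
      = (2 * ‖d‖ ^ 2)⁻¹ * (⟪d, ξ k⟫ - ⟪d, ξ l⟫) := by
    calc (c * ⟪d, ξ k⟫ - c * ⟪d, ξ l⟫) * c = (c * c) * (⟪d, ξ k⟫ - ⟪d, ξ l⟫) := by ring
      _ = _ := by rw [hcc]
  refine ⟨?_, ?_, ?_⟩
  · intro i hik hil
    simp [η, e, m, hik, hil]
  · have hmk : (∑ σ, (∑ i', ⟪m σ i', ξ i'⟫) • m σ k) = (2:ℝ)⁻¹ • (ξ k + ξ l) := by
      rw [← hsum]
      refine Finset.sum_congr rfl fun σ _ => ?_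
      rw [hsm σ]
      simp [m]
    have hη : η k = ξ k - (c * ⟪d, ξ k⟫ - c * ⟪d, ξ l⟫) • (c • d)
        - (2:ℝ)⁻¹ • (ξ k + ξ l) := by
      simp only [η, hse, hmk]
      simp [e]
    rw [hη, smul_smul, hc]
    simp only [Pperp, inner_sub_right]
    match_scalars <;> (field_simp; try ring)
  · have hml : (∑ σ, (∑ i', ⟪m σ i', ξ i'⟫) • m σ l) = (2:ℝ)⁻¹ • (ξ k + ξ l) := by
      rw [← hsum]
      refine Finset.sum_congr rfl fun σ _ => ?_
      rw [hsm σ]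
      simp [m]
    have hη : η l = ξ l - (c * ⟪d, ξ k⟫ - c * ⟪d, ξ l⟫) • (-(c • d))
        - (2:ℝ)⁻¹ • (ξ k + ξ l) := by
      simp only [η, hse, hml]
      simp [e, hkl.symm]
    rw [hη, smul_neg, smul_smul, hc]
    simp only [Pperp, inner_sub_right]
    match_scalars <;> (field_simp; try ring)
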